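/- arXiv:1801.07665 — 6 statements merged into one kernel-verified Lean document; each statement's English description precedes it below -/
import Mathlib

section
/- For y ∈ [1/2, 1] and x ∈ [1-y, y], the function T_{x,y} defined by T_{x,y}(t) = -((1-y)/x)·t + 1 for t ∈ [0,x] and T_{x,y}(t) = -((1-y)/(1-x))·(1-t) + 1 for t ∈ (x,1] satisfies ∫₀¹ 1/(1+T_{x,y}(t))² dt = 1/(2(1+y)). In particular, the value of this integral does not depend on x. -/
/-!
On each of the two pieces `1 + T` is affine, with values `2` and `1 + y` at the ends of the piece.
For a positive affine function `ℓ` on `[u, v]` one has `∫_u^v 1 / ℓ² = (v - u) / (ℓ u * ℓ v)`,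
so the two pieces contribute `x / (2 (1 + y))` and `(1 - x) / (2 (1 + y))`.
-/

open Set MeasureTheory

section AffineInvSq

variable {u v α s : ℝ}

lemma affine_pos_of_mem_Icc (hα : 0 < α) (hβ : 0 < α + s * (v - u)) {t : ℝ} (ht : t ∈ Icc u v) :
    0 < α + s * (t - u) := by
  rcases le_total 0 s with hs | hs
  · nlinarith [ht.1]
  · nlinarith [ht.2]

lemma intervalIntegrable_one_div_sq_affine (huv : u ≤ v) (hα : 0 < α)
    (hβ : 0 < α + s * (v - u)) :
    IntervalIntegrable (fun t => 1 / (α + s * (t - u)) ^ 2) volume u v := by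
  refine ContinuousOn.intervalIntegrable (continuousOn_const.div (by fun_prop) fun t ht => ?_)
  rw [uIcc_of_le huv] at ht
  exact (pow_pos (affine_pos_of_mem_Icc hα hβ ht) 2).ne'

lemma integral_one_div_sq_affine (huv : u ≤ v) (hα : 0 < α) (hβ : 0 < α + s * (v - u)) :
    ∫ t in u..v, 1 / (α + s * (t - u)) ^ 2 = (v - u) / (α * (α + s * (v - u))) := by
  have hderiv : ∀ t ∈ uIcc u v, HasDerivAt (fun t => (t - u) / (α * (α + s * (t - u))))
      (1 / (α + s * (t - u)) ^ 2) t := by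
    intro t ht
    rw [uIcc_of_le huv] at ht
    have hℓ := (affine_pos_of_mem_Icc hα hβ ht).ne'
    have h : HasDerivAt (fun t => (t - u) / (α * (α + s * (t - u))))
        ((1 * (α * (α + s * (t - u))) - (t - u) * (α * (s * 1))) / (α * (α + s * (t - u))) ^ 2) t :=
      ((hasDerivAt_id' t).sub_const u).div
        ((((hasDerivAt_id' t).sub_const u).const_mul s).const_add α |>.const_mul α)
        (mul_ne_zero hα.ne' hℓ)
    exact h.congr_deriv (by field_simp; ring)
  rw [intervalIntegral.integral_eq_sub_of_hasDerivAt hderiv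
    (intervalIntegrable_one_div_sq_affine huv hα hβ)]
  simp

end AffineInvSq

lemma intervalIntegral.integral_eq_add_of_eqOn_Ioo {E : Type*} [NormedAddCommGroup E]
    [NormedSpace ℝ E] {μ : Measure ℝ} [NullSingletonClass μ] {f g h : ℝ → E} {a b c : ℝ}
    (hab : a ≤ b) (hbc : b ≤ c) (hg : IntervalIntegrable g μ a b)
    (hh : IntervalIntegrable h μ b c) (hfg : EqOn g f (Ioo a b)) (hfh : EqOn h f (Ioo b c)) :
    ∫ t in a..c, f t ∂μ = (∫ t in a..b, g t ∂μ) + ∫ t in b..c, h t ∂μ := by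
  rw [← integral_add_adjacent_intervals (hg.congr_uIoo (uIoo_of_le hab ▸ hfg))
    (hh.congr_uIoo (uIoo_of_le hbc ▸ hfh)), integral_congr_Ioo_of_le hab hfg,
    integral_congr_Ioo_of_le hbc hfh]

theorem integral_T_xy (y x : ℝ) (hy : y ∈ Set.Icc (1/2 : ℝ) 1)
    (hx : x ∈ Set.Icc (1 - y) y)
    (T : ℝ → ℝ)
    (hT : ∀ t, T t = if t ≤ x then -((1 - y)/x) * t + 1 else -((1 - y)/(1 - x)) * (1 - t) + 1) :
    ∫ t in (0:ℝ)..1, 1 / (1 + T t)^2 = 1 / (2 * (1 + y)) := by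
  obtain ⟨hy₁, hy₂⟩ := hy
  obtain ⟨hx₁, hx₂⟩ := hx
  -- `x = 0` or `x = 1` forces `y = 1`, so these survive the junk value `0 / 0 = 0`.
  have hax : (1 - y) / x * x = 1 - y := div_mul_cancel_of_imp fun h => by linarith
  have hbx : (1 - y) / (1 - x) * (1 - x) = 1 - y := div_mul_cancel_of_imp fun h => by linarith
  have hleft : 0 < 2 + -((1 - y) / x) * (x - 0) := by linarith
  have hright : 0 < 1 + y + (1 - y) / (1 - x) * (1 - x) := by linarith
  rw [intervalIntegral.integral_eq_add_of_eqOn_Ioo (by linarith) (by linarith)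
    (intervalIntegrable_one_div_sq_affine (by linarith) two_pos hleft)
    (intervalIntegrable_one_div_sq_affine (by linarith) (by linarith) hright)
    (fun t ht => by rw [hT, if_pos ht.2.le]; congr 2; ring)
    (fun t ht => by rw [hT, if_neg (not_le.2 ht.1)]; congr 2; linear_combination hbx),
    integral_one_div_sq_affine (by linarith) two_pos hleft,
    integral_one_div_sq_affine (by linarith) (by linarith) hright]
  rw [neg_mul, sub_zero, hax, hbx]
  ring
end

section
/- For x ∈ [0, 1/2] and y ∈ [1/2, 1] with x < y, the function P_{x,y} defined by P(t) = 1-t on [0,x], P(t) = ((1-x-y)/(x-y))·(t-y) + y on (x,y], and P(t) = t on (y,1] satisfies ∫₀¹ 1/(1+P_{x,y}(t))² dt = (1 - x + xy)/((2-x)(1+y)). -/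
/-! On each of the pieces `[0, x]`, `[x, y]`, `[y, 1]` the function `1 + P_{x,y}` is affine and
positive, and for an affine `u > 0` on `[a, b]` one has `∫ₐᵇ u⁻² = (b - a) / (u a * u b)`, because
`(t - a) / (u a * u t)` is an antiderivative. The three contributions `x / (2 (2 - x))`,
`(y - x) / ((2 - x) (1 + y))` and `(1 - y) / (2 (1 + y))` add up to the claimed value. -/

open Set intervalIntegral

section AffineOn

variable {u : ℝ → ℝ} {a b m : ℝ}

lemma pos_of_affineOn (hu : ∀ t ∈ uIcc a b, u t = u a + m * (t - a))
    (ha : 0 < u a) (hb : 0 < u b) {t : ℝ} (ht : t ∈ uIcc a b) : 0 < u t := by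
  have hab : (t - a) * (t - b) ≤ 0 := by
    rcases mem_uIcc.1 ht with h | h <;> nlinarith [h.1, h.2]
  -- `(u t - u a) * (u t - u b) = m ^ 2 * (t - a) * (t - b) ≤ 0`, so `u t` lies between `u a` and `u b`
  have hub := hu b right_mem_uIcc
  rw [hu t ht]
  nlinarith [sq_nonneg m]

lemma intervalIntegrable_one_div_sq_of_affineOn
    (hu : ∀ t ∈ uIcc a b, u t = u a + m * (t - a)) (ha : 0 < u a) (hb : 0 < u b) :
    IntervalIntegrable (fun t => 1 / u t ^ 2) MeasureTheory.volume a b := by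
  refine ContinuousOn.intervalIntegrable ?_
  refine ContinuousOn.congr (f := fun t => 1 / (u a + m * (t - a)) ^ 2) ?_ ?_
  · refine ContinuousOn.div continuousOn_const (by fun_prop) fun t ht => ?_
    rw [← hu t ht]
    exact (pow_pos (pos_of_affineOn hu ha hb ht) 2).ne'
  · intro t ht
    simp only [hu t ht]

lemma integral_one_div_sq_of_affineOn
    (hu : ∀ t ∈ uIcc a b, u t = u a + m * (t - a)) (ha : 0 < u a) (hb : 0 < u b) :
    ∫ t in a..b, 1 / u t ^ 2 = (b - a) / (u a * u b) := by
  -- this antiderivative avoids dividing by the slope `m`, which may vanish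
  have hderiv : ∀ t ∈ uIcc a b,
      HasDerivAt (fun s => (s - a) / (u a * (u a + m * (s - a)))) (1 / u t ^ 2) t := by
    intro t ht
    have hut : u t ≠ 0 := (pos_of_affineOn hu ha hb ht).ne'
    have hden : HasDerivAt (fun s => u a * (u a + m * (s - a))) (u a * m) t := by
      simpa using (((hasDerivAt_id' t).sub_const a).const_mul m).const_add (u a) |>.const_mul (u a)
    refine (((hasDerivAt_id' t).sub_const a).div hden ?_).congr_deriv ?_
    · rw [← hu t ht]; exact mul_ne_zero ha.ne' hut
    · rw [hu t ht] at hut ⊢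
      field_simp
      ring
  rw [integral_eq_sub_of_hasDerivAt hderiv
    (intervalIntegrable_one_div_sq_of_affineOn hu ha hb), ← hu b right_mem_uIcc]
  simp

end AffineOn

noncomputable def pxy (x y t : ℝ) : ℝ :=
  if t ≤ x then 1 - t else if t ≤ y then (1 - x - y) / (x - y) * (t - y) + y else t

section pxy

variable {x y t : ℝ}

lemma pxy_of_le (h : t ≤ x) : pxy x y t = 1 - t := if_pos h

lemma pxy_of_mem_Icc (hxy : x < y) (h : t ∈ Icc x y) :
    pxy x y t = (1 - x - y) / (x - y) * (t - y) + y := by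
  rcases h.1.eq_or_lt with rfl | htx
  · have : x - y ≠ 0 := sub_ne_zero.2 hxy.ne
    rw [pxy, if_pos le_rfl]
    field_simp
    ring
  · rw [pxy, if_neg htx.not_ge, if_pos h.2]

lemma pxy_of_ge (hxy : x < y) (h : y ≤ t) : pxy x y t = t := by
  rcases h.eq_or_lt with rfl | hyt
  · rw [pxy_of_mem_Icc hxy ⟨hxy.le, le_rfl⟩]
    ring
  · rw [pxy, if_neg (by linarith), if_neg hyt.not_ge]

lemma one_add_pxy_eqOn_left (hx : 0 ≤ x) :
    ∀ t ∈ uIcc 0 x, 1 + pxy x y t = 1 + pxy x y 0 + -1 * (t - 0) := by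
  intro t ht
  rw [uIcc_of_le hx] at ht
  rw [pxy_of_le ht.2, pxy_of_le hx]
  ring

lemma one_add_pxy_eqOn_mid (hxy : x < y) :
    ∀ t ∈ uIcc x y, 1 + pxy x y t = 1 + pxy x y x + (1 - x - y) / (x - y) * (t - x) := by
  intro t ht
  rw [uIcc_of_le hxy.le] at ht
  rw [pxy_of_mem_Icc hxy ht, pxy_of_mem_Icc hxy ⟨le_rfl, hxy.le⟩]
  ring

lemma one_add_pxy_eqOn_right (hxy : x < y) (hy : y ≤ 1) :
    ∀ t ∈ uIcc y 1, 1 + pxy x y t = 1 + pxy x y y + 1 * (t - y) := by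
  intro t ht
  rw [uIcc_of_le hy] at ht
  rw [pxy_of_ge hxy ht.1, pxy_of_ge hxy le_rfl]
  ring

end pxy

theorem integral_P_xy (x y : ℝ) (hx : x ∈ Set.Icc (0:ℝ) (1/2))
    (hy : y ∈ Set.Icc (1/2 : ℝ) 1) (hxy : x < y)
    (P : ℝ → ℝ)
    (hP : ∀ t, P t = if t ≤ x then 1 - t
      else if t ≤ y then ((1 - x - y)/(x - y)) * (t - y) + y else t) :
    ∫ t in (0:ℝ)..1, 1 / (1 + P t)^2 = (1 - x + x * y) / ((2 - x) * (1 + y)) := by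
  obtain ⟨hx0, -⟩ := hx
  obtain ⟨-, hy1⟩ := hy
  obtain rfl : P = pxy x y := funext hP
  have h₀ : 1 + pxy x y 0 = 2 := by rw [pxy_of_le hx0]; norm_num
  have hx' : 1 + pxy x y x = 2 - x := by rw [pxy_of_le le_rfl]; ring
  have hy' : 1 + pxy x y y = 1 + y := by rw [pxy_of_ge hxy le_rfl]
  have h₁ : 1 + pxy x y 1 = 2 := by rw [pxy_of_ge hxy hy1]; norm_num
  have pos₀ : 0 < 1 + pxy x y 0 := by rw [h₀]; norm_num
  have posx : 0 < 1 + pxy x y x := by rw [hx']; linarith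
  have posy : 0 < 1 + pxy x y y := by rw [hy']; linarith
  have pos₁ : 0 < 1 + pxy x y 1 := by rw [h₁]; norm_num
  have left := one_add_pxy_eqOn_left (y := y) hx0
  have mid := one_add_pxy_eqOn_mid hxy
  have right := one_add_pxy_eqOn_right hxy hy1
  have int_left := intervalIntegrable_one_div_sq_of_affineOn left pos₀ posx
  have int_mid := intervalIntegrable_one_div_sq_of_affineOn mid posx posy
  rw [← integral_add_adjacent_intervals (int_left.trans int_mid)
      (intervalIntegrable_one_div_sq_of_affineOn right posy pos₁),
    ← integral_add_adjacent_intervals int_left int_mid,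
    integral_one_div_sq_of_affineOn left pos₀ posx, integral_one_div_sq_of_affineOn mid posx posy,
    integral_one_div_sq_of_affineOn right posy pos₁, h₀, hx', hy', h₁]
  have : 2 - x ≠ 0 := by linarith
  have : 1 + y ≠ 0 := by linarith
  field_simp
  ring
end

section
/- Let A be a Pickands dependence function and suppose ∫₀¹ 1/(1+A(t))² dt = (ρ₀+3)/12 for some ρ₀ ∈ [0,1] (i.e. Spearman's rho of C_A equals ρ₀). Then A(t) ≥ L_{(3-ρ₀)/(3+ρ₀)}(t) for all t ∈ [0,1], where L_y(t) = max(1-t, y, t). -/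
/-!
Fix `t ∈ [0,1]` and put `c = A t`. By convexity, `1 + A` lies below its chords on `[0,t]` and
`[t,1]`, i.e. `A` lies below the triangle `T_{t,c}` through `(0,1)`, `(t,c)`, `(1,1)`. For an
affine `ℓ > 0` on `[a,b]` one has `∫ₐᵇ ℓ⁻² = (b - a) / (ℓ a * ℓ b)`, so
`∫₀¹ (1 + A)⁻² ≥ t / (2(1+c)) + (1-t) / (2(1+c)) = 1 / (2(1+c))`,
and comparing with `(ρ₀ + 3) / 12` gives `c ≥ (3 - ρ₀) / (3 + ρ₀)`.
-/

open Set MeasureTheory intervalIntegral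

theorem intervalIntegrable_of_continuousOn_Ioo_of_norm_le {E : Type*} [NormedAddCommGroup E]
    {f : ℝ → E} {a b : ℝ} (C : ℝ) (hab : a ≤ b) (hf : ContinuousOn f (Ioo a b))
    (hC : ∀ x ∈ Ioo a b, ‖f x‖ ≤ C) : IntervalIntegrable f volume a b := by
  rw [intervalIntegrable_iff_integrableOn_Ioo_of_le hab]
  exact IntegrableOn.of_bound measure_Ioo_lt_top (hf.aestronglyMeasurable measurableSet_Ioo) C
    ((ae_restrict_iff' measurableSet_Ioo).2 (Filter.Eventually.of_forall hC))

theorem integral_one_div_affine_sq {a b u q : ℝ} (h : ∀ x ∈ uIcc a b, u + q * (x - a) ≠ 0) :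
    ∫ x in a..b, 1 / (u + q * (x - a)) ^ 2 = (b - a) / (u * (u + q * (b - a))) := by
  have hu : u ≠ 0 := by simpa using h a left_mem_uIcc
  have hderiv : ∀ x ∈ uIcc a b, HasDerivAt (fun x => (x - a) / (u * (u + q * (x - a))))
      (1 / (u + q * (x - a)) ^ 2) x := by
    intro x hx
    have hlin : HasDerivAt (fun x => x - a) 1 x := (hasDerivAt_id x).sub_const a
    refine (hlin.div (((hlin.const_mul q).const_add u).const_mul u)
      (mul_ne_zero hu (h x hx))).congr_deriv ?_
    field_simp [h x hx]
    ring
  have hcont : ContinuousOn (fun x => 1 / (u + q * (x - a)) ^ 2) (uIcc a b) :=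
    continuousOn_const.div (by fun_prop) fun x hx => pow_ne_zero 2 (h x hx)
  rw [integral_eq_sub_of_hasDerivAt hderiv hcont.intervalIntegrable]
  simp

theorem ConvexOn.le_secant {f : ℝ → ℝ} {a b x : ℝ} (hf : ConvexOn ℝ (Icc a b) f)
    (hab : a < b) (hx : x ∈ Icc a b) : f x ≤ f a + (f b - f a) / (b - a) * (x - a) := by
  have hba : 0 < b - a := sub_pos.2 hab
  have key := hf.2 (left_mem_Icc.2 hab.le) (right_mem_Icc.2 hab.le)
    (div_nonneg (sub_nonneg.2 hx.2) hba.le) (div_nonneg (sub_nonneg.2 hx.1) hba.le)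
    (by field_simp [hba.ne']; ring)
  simp only [smul_eq_mul] at key
  have hpoint : (b - x) / (b - a) * a + (x - a) / (b - a) * b = x := by
    field_simp [hba.ne']; ring
  rw [hpoint] at key
  calc f x ≤ (b - x) / (b - a) * f a + (x - a) / (b - a) * f b := key
    _ = f a + (f b - f a) / (b - a) * (x - a) := by field_simp [hba.ne']; ring

theorem ConvexOn.sub_div_mul_le_integral_one_div_sq {f : ℝ → ℝ} {a b : ℝ} (hab : a ≤ b)
    (hf : ConvexOn ℝ (Icc a b) f) (hpos : ∀ x ∈ Icc a b, 0 < f x)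
    (hint : IntervalIntegrable (fun x => 1 / f x ^ 2) volume a b) :
    (b - a) / (f a * f b) ≤ ∫ x in a..b, 1 / f x ^ 2 := by
  rcases hab.eq_or_lt with rfl | hab
  · simp
  set q := (f b - f a) / (b - a)
  have hchord (x : ℝ) (hx : x ∈ Icc a b) : f x ≤ f a + q * (x - a) := hf.le_secant hab hx
  have hchord_pos (x : ℝ) (hx : x ∈ uIcc a b) : 0 < f a + q * (x - a) := by
    rw [uIcc_of_le hab.le] at hx
    exact (hpos x hx).trans_le (hchord x hx)
  have hqb : f a + q * (b - a) = f b := by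
    simp only [q]; field_simp [(sub_pos.2 hab).ne']; ring
  have hcont : ContinuousOn (fun x => 1 / (f a + q * (x - a)) ^ 2) (uIcc a b) :=
    continuousOn_const.div (by fun_prop) fun x hx => pow_ne_zero 2 (hchord_pos x hx).ne'
  calc (b - a) / (f a * f b) = ∫ x in a..b, 1 / (f a + q * (x - a)) ^ 2 := by
        rw [integral_one_div_affine_sq fun x hx => (hchord_pos x hx).ne', hqb]
    _ ≤ ∫ x in a..b, 1 / f x ^ 2 :=
        integral_mono_on hab.le hcont.intervalIntegrable hint fun x hx =>
          one_div_le_one_div_of_le (pow_pos (hpos x hx) 2)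
            (pow_le_pow_left₀ (hpos x hx).le (hchord x hx) 2)

theorem ConvexOn.intervalIntegrable_one_div_sq {f : ℝ → ℝ} {a b c : ℝ} (hab : a ≤ b)
    (hf : ConvexOn ℝ (Icc a b) f) (hc : 0 < c) (hfc : ∀ x ∈ Icc a b, c ≤ f x) :
    IntervalIntegrable (fun x => 1 / f x ^ 2) volume a b := by
  have hpos (x : ℝ) (hx : x ∈ Ioo a b) : 0 < f x := hc.trans_le (hfc x (Ioo_subset_Icc_self hx))
  have hcont := hf.continuousOn_interior
  rw [interior_Icc] at hcont
  refine intervalIntegrable_of_continuousOn_Ioo_of_norm_le (1 / c ^ 2) hab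
    (continuousOn_const.div (hcont.pow 2) fun x hx => pow_ne_zero 2 (hpos x hx).ne')
    fun x hx => ?_
  rw [Real.norm_of_nonneg (by have := hpos x hx; positivity)]
  exact one_div_le_one_div_of_le (pow_pos hc 2)
    (pow_le_pow_left₀ hc.le (hfc x (Ioo_subset_Icc_self hx)) 2)

theorem one_div_two_mul_one_add_le_integral_of_convexOn {A : ℝ → ℝ}
    (hconv : ConvexOn ℝ (Icc 0 1) A) (h0 : A 0 = 1) (h1 : A 1 = 1)
    (hnonneg : ∀ s ∈ Icc (0 : ℝ) 1, 0 ≤ A s) {t : ℝ} (ht : t ∈ Icc (0 : ℝ) 1) :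
    1 / (2 * (1 + A t)) ≤ ∫ s in (0 : ℝ)..1, 1 / (1 + A s) ^ 2 := by
  have hf : ConvexOn ℝ (Icc 0 1) fun s => 1 + A s := (convexOn_const 1 (convex_Icc 0 1)).add hconv
  have hpos (s : ℝ) (hs : s ∈ Icc (0 : ℝ) 1) : 0 < 1 + A s := by linarith [hnonneg s hs]
  have hint : IntervalIntegrable (fun s => 1 / (1 + A s) ^ 2) volume 0 1 :=
    hf.intervalIntegrable_one_div_sq zero_le_one one_pos fun s hs => by linarith [hnonneg s hs]
  have ht' : t ∈ uIcc (0 : ℝ) 1 := by rwa [uIcc_of_le zero_le_one]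
  have hint_left := hint.mono_set (uIcc_subset_uIcc left_mem_uIcc ht')
  have hint_right := hint.mono_set (uIcc_subset_uIcc ht' right_mem_uIcc)
  have hsub_left : Icc 0 t ⊆ Icc 0 1 := Icc_subset_Icc_right ht.2
  have hsub_right : Icc t 1 ⊆ Icc 0 1 := Icc_subset_Icc_left ht.1
  have hleft := (hf.subset hsub_left (convex_Icc _ _)).sub_div_mul_le_integral_one_div_sq ht.1
    (fun s hs => hpos s (hsub_left hs)) hint_left
  have hright := (hf.subset hsub_right (convex_Icc _ _)).sub_div_mul_le_integral_one_div_sq ht.2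
    (fun s hs => hpos s (hsub_right hs)) hint_right
  rw [← integral_add_adjacent_intervals hint_left hint_right]
  norm_num only [h0, h1, sub_zero] at hleft hright
  calc 1 / (2 * (1 + A t)) = t / (2 * (1 + A t)) + (1 - t) / ((1 + A t) * 2) := by
        field_simp [(hpos t ht).ne']; ring
    _ ≤ _ := add_le_add hleft hright

theorem lower_bound_rho_general (A : ℝ → ℝ) (ρ₀ : ℝ)
    (hconv : ConvexOn ℝ (Set.Icc (0:ℝ) 1) A)
    (h0 : A 0 = 1) (h1 : A 1 = 1)
    (hbound : ∀ t ∈ Set.Icc (0:ℝ) 1, max (1 - t) t ≤ A t ∧ A t ≤ 1)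
    (hrho : ∫ t in (0:ℝ)..1, 1 / (1 + A t)^2 = (ρ₀ + 3) / 12) :
    ∀ t ∈ Set.Icc (0:ℝ) 1, max (max (1 - t) ((3 - ρ₀)/(3 + ρ₀))) t ≤ A t := by
  intro t ht
  have hlow (s : ℝ) (hs : s ∈ Icc (0 : ℝ) 1) : max (1 - s) s ≤ A s := (hbound s hs).1
  have hnonneg (s : ℝ) (hs : s ∈ Icc (0 : ℝ) 1) : 0 ≤ A s :=
    hs.1.trans ((le_max_right _ _).trans (hlow s hs))
  have hspearman := one_div_two_mul_one_add_le_integral_of_convexOn hconv h0 h1 hnonneg ht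
  rw [hrho] at hspearman
  have hAt := hnonneg t ht
  have hρ : 0 < 3 + ρ₀ := by
    have : 0 < 1 / (2 * (1 + A t)) := by positivity
    linarith
  rw [div_le_div_iff₀ (by positivity) (by norm_num)] at hspearman
  have hy : (3 - ρ₀) / (3 + ρ₀) ≤ A t := by
    rw [div_le_iff₀ hρ]; linarith
  exact max_le (max_le ((le_max_left _ _).trans (hlow t ht)) hy)
    ((le_max_right _ _).trans (hlow t ht))

theorem lower_bound_rho (A : ℝ → ℝ) (ρ₀ : ℝ) (hρ : ρ₀ ∈ Set.Icc (0:ℝ) 1)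
    (hconv : ConvexOn ℝ (Set.Icc (0:ℝ) 1) A)
    (h0 : A 0 = 1) (h1 : A 1 = 1)
    (hbound : ∀ t ∈ Set.Icc (0:ℝ) 1, max (1 - t) t ≤ A t ∧ A t ≤ 1)
    (hrho : ∫ t in (0:ℝ)..1, 1 / (1 + A t)^2 = (ρ₀ + 3) / 12) :
    ∀ t ∈ Set.Icc (0:ℝ) 1, max (max (1 - t) ((3 - ρ₀)/(3 + ρ₀))) t ≤ A t :=
  lower_bound_rho_general A ρ₀ hconv h0 h1 hbound hrho
end

section
/- Fix ρ₀ ∈ (0,1) and define y_{ρ₀}(t) = (-6 + 2ρ₀ - 15t - ρ₀t - 6√(6 - 2ρ₀ - (15+ρ₀)t(1-t)))/(-30 - 2ρ₀ + 15t + ρ₀t). Then y_{ρ₀}((3-ρ₀)/(6+ρ₀)) = (3-ρ₀)/(3+ρ₀) and y_{ρ₀}((3+2ρ₀)/(6+ρ₀)) = 1, and y_{ρ₀} is strictly increasing on [(3-ρ₀)/(6+ρ₀), (3+2ρ₀)/(6+ρ₀)]. -/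
/-!
The denominator of `y` is `-(15 + ρ) (2 - t)`, and with `z = 6 / (2 - t) - (15 + ρ) / 4` the
radicand becomes `(2 - t)² (z² + m)` with `m = (15 + ρ)(1 - ρ) / 16`. Hence for `t < 2`
`y(t) = 1/2 + 6 / (15 + ρ) · (z + √(z² + m))`. Since `m > 0` for `ρ ∈ (-15, 1)`, the map
`z ↦ z + √(z² + m)` is strictly increasing, and so is `t ↦ z` on `t < 2`. The endpoint values
are direct computations: at both endpoints the radicand is `(3 (3 - ρ) / (6 + ρ))²`.
-/

open Real

theorem strictMono_add_sqrt_sq_add {m : ℝ} (hm : 0 < m) :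
    StrictMono fun x : ℝ => x + √(x ^ 2 + m) := by
  intro x₁ x₂ hx
  have hpos : 0 < x₂ + √(x₂ ^ 2 + m) := by
    have : |x₂| < √(x₂ ^ 2 + m) := by
      rw [← sqrt_sq_eq_abs]
      exact sqrt_lt_sqrt (sq_nonneg _) (by linarith)
    linarith [neg_abs_le x₂]
  have hsq := sq_sqrt (by positivity : 0 ≤ x₂ ^ 2 + m)
  -- After squaring, the claim reads `0 < 2 (x₂ - x₁) (x₂ + √(x₂² + m))`.
  have : √(x₁ ^ 2 + m) < x₂ - x₁ + √(x₂ ^ 2 + m) := by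
    rw [sqrt_lt' (by linarith [sqrt_nonneg (x₂ ^ 2 + m)])]
    nlinarith [mul_pos (sub_pos.2 hx) hpos]
  show x₁ + √(x₁ ^ 2 + m) < x₂ + √(x₂ ^ 2 + m)
  linarith

noncomputable def yRho (ρ t : ℝ) : ℝ :=
  (-6 + 2 * ρ - 15 * t - ρ * t - 6 * √(6 - 2 * ρ - (15 + ρ) * t * (1 - t))) /
    (-30 - 2 * ρ + 15 * t + ρ * t)

theorem yRho_eq_add_sqrt {ρ t : ℝ} (hρ : 15 + ρ ≠ 0) (ht : t < 2) :
    yRho ρ t = 1 / 2 + 6 / (15 + ρ) * ((6 / (2 - t) - (15 + ρ) / 4) +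
      √((6 / (2 - t) - (15 + ρ) / 4) ^ 2 + (15 + ρ) * (1 - ρ) / 16)) := by
  have hw : 0 < 2 - t := by linarith
  set z := 6 / (2 - t) - (15 + ρ) / 4 with hz
  have hsqrt : √(6 - 2 * ρ - (15 + ρ) * t * (1 - t)) =
      (2 - t) * √(z ^ 2 + (15 + ρ) * (1 - ρ) / 16) := by
    rw [← sqrt_sq hw.le, ← sqrt_mul (sq_nonneg _), hz]
    congr 1
    field_simp
    ring
  have hden : -30 - 2 * ρ + 15 * t + ρ * t = -(15 + ρ) * (2 - t) := by ring
  rw [yRho, hsqrt, hden, hz]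
  generalize √(z ^ 2 + (15 + ρ) * (1 - ρ) / 16) = S
  field_simp
  ring

theorem yRho_strictMonoOn_Iio_two {ρ : ℝ} (h₁ : -15 < ρ) (h₂ : ρ < 1) :
    StrictMonoOn (yRho ρ) (Set.Iio 2) := by
  have hz : StrictMonoOn (fun t : ℝ => 6 / (2 - t) - (15 + ρ) / 4) (Set.Iio 2) := by
    intro s _ t (ht : t < 2) hst
    simpa using div_lt_div_of_pos_left (by norm_num : (0 : ℝ) < 6) (sub_pos.2 ht)
      (sub_lt_sub_left hst 2)
  have hφ := strictMono_add_sqrt_sq_add (by nlinarith : 0 < (15 + ρ) * (1 - ρ) / 16)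
  have hc : 0 < 6 / (15 + ρ) := div_pos (by norm_num) (by linarith)
  intro s hs t ht hst
  rw [yRho_eq_add_sqrt (by linarith) hs, yRho_eq_add_sqrt (by linarith) ht]
  gcongr 1 / 2 + 6 / (15 + ρ) * ?_
  exact hφ (hz hs ht hst)

theorem yRho_left_endpoint {ρ : ℝ} (h₁ : -3 < ρ) (h₂ : ρ ≤ 3) :
    yRho ρ ((3 - ρ) / (6 + ρ)) = (3 - ρ) / (3 + ρ) := by
  have h6 : 0 < 6 + ρ := by linarith
  have hsqrt : √(6 - 2 * ρ - (15 + ρ) * ((3 - ρ) / (6 + ρ)) * (1 - (3 - ρ) / (6 + ρ))) =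
      3 * (3 - ρ) / (6 + ρ) := by
    rw [← sqrt_sq (div_nonneg (by linarith) h6.le : 0 ≤ 3 * (3 - ρ) / (6 + ρ))]
    congr 1
    field_simp
    ring
  have hden : (-30 - 2 * ρ + 15 * ((3 - ρ) / (6 + ρ)) + ρ * ((3 - ρ) / (6 + ρ))) * (6 + ρ) =
      -3 * ((15 + ρ) * (3 + ρ)) := by
    field_simp
    ring
  rw [yRho, hsqrt, div_eq_div_iff (left_ne_zero_of_mul (by rw [hden]; nlinarith)) (by linarith)]
  field_simp
  ring

theorem yRho_right_endpoint {ρ : ℝ} (h₁ : -6 < ρ) (h₂ : ρ ≤ 3) :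
    yRho ρ ((3 + 2 * ρ) / (6 + ρ)) = 1 := by
  have h6 : 0 < 6 + ρ := by linarith
  have hsqrt : √(6 - 2 * ρ - (15 + ρ) * ((3 + 2 * ρ) / (6 + ρ)) *
      (1 - (3 + 2 * ρ) / (6 + ρ))) = 3 * (3 - ρ) / (6 + ρ) := by
    rw [← sqrt_sq (div_nonneg (by linarith) h6.le : 0 ≤ 3 * (3 - ρ) / (6 + ρ))]
    congr 1
    field_simp
    ring
  have hden : (-30 - 2 * ρ + 15 * ((3 + 2 * ρ) / (6 + ρ)) + ρ * ((3 + 2 * ρ) / (6 + ρ))) *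
      (6 + ρ) = -9 * (15 + ρ) := by
    field_simp
    ring
  rw [yRho, hsqrt, div_eq_one_iff_eq (left_ne_zero_of_mul (by rw [hden]; linarith))]
  field_simp
  ring

theorem y_rho_mono (ρ₀ : ℝ) (hρ : ρ₀ ∈ Set.Ioo (0:ℝ) 1)
    (y : ℝ → ℝ)
    (hy : ∀ t, y t = (-6 + 2 * ρ₀ - 15 * t - ρ₀ * t -
        6 * Real.sqrt (6 - 2 * ρ₀ - (15 + ρ₀) * t * (1 - t))) /
        (-30 - 2 * ρ₀ + 15 * t + ρ₀ * t)) :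
    y ((3 - ρ₀)/(6 + ρ₀)) = (3 - ρ₀)/(3 + ρ₀) ∧
    y ((3 + 2 * ρ₀)/(6 + ρ₀)) = 1 ∧
    StrictMonoOn y (Set.Icc ((3 - ρ₀)/(6 + ρ₀)) ((3 + 2 * ρ₀)/(6 + ρ₀))) := by
  obtain ⟨h₀, h₁⟩ := hρ
  obtain rfl : y = yRho ρ₀ := funext hy
  have hIcc : Set.Icc ((3 - ρ₀) / (6 + ρ₀)) ((3 + 2 * ρ₀) / (6 + ρ₀)) ⊆ Set.Iio 2 :=
    fun t ht ↦ ht.2.trans_lt ((div_lt_iff₀ (by linarith)).2 (by linarith))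
  exact ⟨yRho_left_endpoint (by linarith) (by linarith),
    yRho_right_endpoint (by linarith) (by linarith),
    (yRho_strictMonoOn_Iio_two (by linarith) h₁).mono hIcc⟩
end

section
/- Fix ρ₀ ∈ (0,1). With S_{ρ₀}(t) = (9 - ρ₀ + 4√(6 - 2ρ₀ - (15+ρ₀)t(1-t)))/(15+ρ₀) and the linear function g(t) = (-3 + 3ρ₀ - 2ρ₀t)/(-3 + ρ₀), one has g(t) ≤ S_{ρ₀}(t) for all t ∈ [1/2, (3+2ρ₀)/(6+ρ₀)], with equality exactly at t = (3+2ρ₀)/(6+ρ₀). -/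
/-!
Clearing denominators, `S t - g t` has the sign of `4 (3 - ρ₀) √D - a`, where `D` is the radicand
of `S` and `a = 2 (9 - 15 ρ₀ - 2 ρ₀² + ρ₀ (15 + ρ₀) t)` is positive for `t ≥ 1/2`. The identity
`16 (3 - ρ₀)² D = a² + 4 (1 - ρ₀) (15 + ρ₀) ((6 + ρ₀) t - (3 + 2 ρ₀))²` then gives
`4 (3 - ρ₀) √D = √(a² + (nonnegative square)) ≥ a`, with equality exactly at the root of that square.
-/

lemma Real.le_sqrt_sq_add (a : ℝ) {b : ℝ} (hb : 0 ≤ b) : a ≤ √(a ^ 2 + b) :=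
  (le_abs_self a).trans (Real.abs_le_sqrt (by linarith))

lemma Real.sqrt_sq_add_eq_iff {a b : ℝ} (ha : 0 ≤ a) (hb : 0 ≤ b) : √(a ^ 2 + b) = a ↔ b = 0 := by
  rw [Real.sqrt_eq_iff_mul_self_eq (by positivity) ha]
  constructor <;> intro h <;> linarith

lemma S_sub_g_eq (ρ t s : ℝ) (h3 : ρ ≠ 3) (h15 : 15 + ρ ≠ 0) :
    (9 - ρ + 4 * s) / (15 + ρ) - (-3 + 3 * ρ - 2 * ρ * t) / (-3 + ρ) =
      (4 * (3 - ρ) * s - 2 * (9 - 15 * ρ - 2 * ρ ^ 2 + ρ * (15 + ρ) * t)) /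
        ((15 + ρ) * (3 - ρ)) := by
  have h3' : -3 + ρ ≠ 0 := fun h => h3 (by linarith)
  have h3'' : 3 - ρ ≠ 0 := fun h => h3 (by linarith)
  field_simp
  ring

lemma sq_mul_radicand_eq (ρ t : ℝ) :
    (4 * (3 - ρ)) ^ 2 * (6 - 2 * ρ - (15 + ρ) * t * (1 - t)) =
      (2 * (9 - 15 * ρ - 2 * ρ ^ 2 + ρ * (15 + ρ) * t)) ^ 2 +
        4 * (1 - ρ) * (15 + ρ) * ((6 + ρ) * t - (3 + 2 * ρ)) ^ 2 := by
  ring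

lemma mul_sqrt_radicand_eq {ρ : ℝ} (t : ℝ) (hρ : ρ ≤ 3) :
    4 * (3 - ρ) * √(6 - 2 * ρ - (15 + ρ) * t * (1 - t)) =
      √((2 * (9 - 15 * ρ - 2 * ρ ^ 2 + ρ * (15 + ρ) * t)) ^ 2 +
        4 * (1 - ρ) * (15 + ρ) * ((6 + ρ) * t - (3 + 2 * ρ)) ^ 2) := by
  rw [← sq_mul_radicand_eq, Real.sqrt_mul (sq_nonneg _), Real.sqrt_sq (by linarith)]

lemma linear_numerator_pos {ρ t : ℝ} (hρ : ρ ∈ Set.Ioo (0 : ℝ) 1) (ht : 1 / 2 ≤ t) :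
    0 < 2 * (9 - 15 * ρ - 2 * ρ ^ 2 + ρ * (15 + ρ) * t) := by
  obtain ⟨hρ0, hρ1⟩ := hρ
  nlinarith [mul_pos hρ0 (by linarith : (0 : ℝ) < 15 + ρ)]

theorem g_le_S (ρ₀ : ℝ) (hρ : ρ₀ ∈ Set.Ioo (0:ℝ) 1)
    (S g : ℝ → ℝ)
    (hS : ∀ t, S t = (9 - ρ₀ + 4 * Real.sqrt (6 - 2 * ρ₀ - (15 + ρ₀) * t * (1 - t))) /
        (15 + ρ₀))
    (hg : ∀ t, g t = (-3 + 3 * ρ₀ - 2 * ρ₀ * t) / (-3 + ρ₀)) :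
    ∀ t ∈ Set.Icc (1/2 : ℝ) ((3 + 2 * ρ₀)/(6 + ρ₀)),
      g t ≤ S t ∧ (g t = S t ↔ t = (3 + 2 * ρ₀)/(6 + ρ₀)) := by
  rintro t ⟨ht, -⟩
  have hρ0 := hρ.1
  have hρ1 := hρ.2
  set a := 2 * (9 - 15 * ρ₀ - 2 * ρ₀ ^ 2 + ρ₀ * (15 + ρ₀) * t)
  set u := (6 + ρ₀) * t - (3 + 2 * ρ₀)
  have hk : 0 < 4 * (1 - ρ₀) * (15 + ρ₀) := by nlinarith
  have hden : 0 < (15 + ρ₀) * (3 - ρ₀) := by nlinarith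
  have hgap : S t - g t = (√(a ^ 2 + 4 * (1 - ρ₀) * (15 + ρ₀) * u ^ 2) - a) /
      ((15 + ρ₀) * (3 - ρ₀)) := by
    rw [hS, hg, S_sub_g_eq _ _ _ (by linarith) (by linarith), mul_sqrt_radicand_eq _ (by linarith)]
  refine ⟨?_, ?_⟩
  · rw [← sub_nonneg, hgap]
    exact div_nonneg (sub_nonneg.2 (Real.le_sqrt_sq_add a (by positivity))) hden.le
  · rw [eq_comm, ← sub_eq_zero, hgap, div_eq_zero_iff, or_iff_left hden.ne', sub_eq_zero,
      Real.sqrt_sq_add_eq_iff (linear_numerator_pos hρ ht).le (by positivity),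
      mul_eq_zero, or_iff_right hk.ne', pow_eq_zero_iff two_ne_zero, sub_eq_zero,
      eq_div_iff (by linarith), mul_comm]
end

section
/- Fix τ₀ ∈ (0,1). For every y ∈ [1/(1+τ₀), 1], the function P_{h_{τ₀}(y), y} (where h_{τ₀}(y) = (-1+y+τ₀y)/(-3+τ₀+4y)) satisfies P_{h_{τ₀}(y), y}(1/2) = 1 - τ₀/2; i.e., the value at 1/2 is independent of y. Consequently the pointwise supremum over y ∈ [1/(1+τ₀), 1] of the family P_{h_{τ₀}(y),y} equals the tent function T_{1/2, 1-τ₀/2}. -/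
/-!
For `y ∈ [1/(1+τ₀), 1]` the kink `x = h_{τ₀}(y)` lies below `1/2 < y`, and the middle segment of
`P_{x,y}` is the line through `(1/2, 1 - τ₀/2)` with slope `s(y) = (τ₀ + 2y - 2)/(2y - 1)`; this
gives the value at `1/2`. Writing the tent as `1 - τ₀/2 + τ₀ |t - 1/2|`, the bound `|s(y)| ≤ τ₀`
puts the middle segment below it, and the outer pieces `1 - t` and `t` lie below it on `[0, 1]`.
The endpoints `y = 1/(1+τ₀)` (slope `-τ₀`) and `y = 1` (slope `τ₀`) attain the tent on `[0, 1/2]`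
and on `[1/2, 1]` respectively.
-/

open Set

noncomputable def bentLine (x y t : ℝ) : ℝ :=
  if t ≤ x then 1 - t else if t ≤ y then (1 - x - y) / (x - y) * (t - y) + y else t

noncomputable def kink (τ y : ℝ) : ℝ := (-1 + y + τ * y) / (-3 + τ + 4 * y)

noncomputable def midSlope (τ y : ℝ) : ℝ := (τ + 2 * y - 2) / (2 * y - 1)

noncomputable def tent (τ t : ℝ) : ℝ := 1 - τ / 2 + τ * |t - 1 / 2|

lemma tent_eq_ite (τ t : ℝ) :
    tent τ t = if t ≤ 1/2 then 1 + ((1 - τ/2) - 1) / (1/2) * t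
      else (1 - τ/2) + (1 - (1 - τ/2)) / (1/2) * (t - 1/2) := by
  unfold tent
  split_ifs with ht
  · rw [abs_of_nonpos (by linarith)]; ring
  · rw [abs_of_pos (by linarith)]; ring

lemma one_sub_le_tent {τ t : ℝ} (hτ0 : 0 ≤ τ) (hτ1 : τ ≤ 1) (ht : 0 ≤ t) :
    1 - t ≤ tent τ t := by
  unfold tent
  nlinarith [le_abs_self (t - 1/2), neg_abs_le (t - 1/2), mul_nonneg ht (sub_nonneg.2 hτ1)]

lemma self_le_tent {τ t : ℝ} (hτ0 : 0 ≤ τ) (hτ1 : τ ≤ 1) (ht : t ≤ 1) : t ≤ tent τ t := by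
  unfold tent
  nlinarith [le_abs_self (t - 1/2), mul_nonneg (sub_nonneg.2 ht) (sub_nonneg.2 hτ1)]

lemma line_le_tent {τ s : ℝ} (hs : |s| ≤ τ) (t : ℝ) : 1 - τ / 2 + s * (t - 1/2) ≤ tent τ t := by
  have : s * (t - 1/2) ≤ τ * |t - 1/2| :=
    calc s * (t - 1/2) ≤ |s| * |t - 1/2| := by rw [← abs_mul]; exact le_abs_self _
      _ ≤ τ * |t - 1/2| := by gcongr
  unfold tent
  linarith

lemma bentLine_of_mem_Icc {x y t : ℝ} (hxy : x < y) (ht : t ∈ Icc x y) :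
    bentLine x y t = (1 - x - y) / (x - y) * (t - y) + y := by
  have hne : x - y ≠ 0 := (sub_neg.2 hxy).ne
  unfold bentLine
  split_ifs with htx hty
  · obtain rfl : t = x := le_antisymm htx ht.1
    field_simp
    ring
  · rfl
  · exact absurd ht.2 hty

section kink

variable {τ y : ℝ}

lemma half_lt_of_inv_one_add_le (hτ0 : 0 < τ) (hτ1 : τ < 1) (hy : 1 / (1 + τ) ≤ y) :
    1/2 < y := by
  rw [div_le_iff₀ (by linarith)] at hy
  nlinarith

lemma kink_denom_pos (hτ0 : 0 < τ) (hτ1 : τ < 1) (hy : 1 / (1 + τ) ≤ y) :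
    0 < -3 + τ + 4 * y := by
  rw [div_le_iff₀ (by linarith)] at hy
  nlinarith [sq_nonneg (1 - τ)]

lemma kink_lt_half (hτ0 : 0 < τ) (hτ1 : τ < 1) (hy : 1 / (1 + τ) ≤ y) :
    kink τ y < 1/2 := by
  have hy2 := half_lt_of_inv_one_add_le hτ0 hτ1 hy
  rw [kink, div_lt_iff₀ (kink_denom_pos hτ0 hτ1 hy)]
  nlinarith [mul_pos (sub_pos.2 hτ1) (sub_pos.2 hy2)]

lemma kink_slope (hτ0 : 0 < τ) (hτ1 : τ < 1) (hy : 1 / (1 + τ) ≤ y) :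
    (1 - kink τ y - y) / (kink τ y - y) = midSlope τ y := by
  have hy2 := half_lt_of_inv_one_add_le hτ0 hτ1 hy
  have hD := (kink_denom_pos hτ0 hτ1 hy).ne'
  have hx : kink τ y - y ≠ 0 := by linarith [kink_lt_half hτ0 hτ1 hy]
  have hcancel : kink τ y * (-3 + τ + 4 * y) = -1 + y + τ * y := div_mul_cancel₀ _ hD
  rw [midSlope, div_eq_div_iff hx (by linarith)]
  linear_combination -hcancel

lemma bentLine_kink_eq (hτ0 : 0 < τ) (hτ1 : τ < 1) (hy : 1 / (1 + τ) ≤ y) {t : ℝ}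
    (ht : t ∈ Icc (kink τ y) y) :
    bentLine (kink τ y) y t = 1 - τ / 2 + midSlope τ y * (t - 1/2) := by
  have hy2 := half_lt_of_inv_one_add_le hτ0 hτ1 hy
  rw [bentLine_of_mem_Icc (by linarith [kink_lt_half hτ0 hτ1 hy]) ht, kink_slope hτ0 hτ1 hy,
    midSlope]
  field_simp [show 2 * y - 1 ≠ 0 by linarith]
  ring

lemma bentLine_kink_half (hτ0 : 0 < τ) (hτ1 : τ < 1) (hy : 1 / (1 + τ) ≤ y) :
    bentLine (kink τ y) y (1/2) = 1 - τ / 2 := by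
  rw [bentLine_kink_eq hτ0 hτ1 hy
    ⟨(kink_lt_half hτ0 hτ1 hy).le, (half_lt_of_inv_one_add_le hτ0 hτ1 hy).le⟩]
  ring

lemma abs_midSlope_le (hτ0 : 0 < τ) (hτ1 : τ < 1) (hy : y ∈ Icc (1 / (1 + τ)) 1) :
    |midSlope τ y| ≤ τ := by
  have hy2 := half_lt_of_inv_one_add_le hτ0 hτ1 hy.1
  have hy1 : 1 ≤ y * (1 + τ) := (div_le_iff₀ (by linarith)).1 hy.1
  rw [midSlope, abs_le, le_div_iff₀ (by linarith), div_le_iff₀ (by linarith)]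
  constructor <;> nlinarith [mul_nonneg (sub_nonneg.2 hy.2) (sub_pos.2 hτ1).le]

lemma bentLine_kink_le_tent (hτ0 : 0 < τ) (hτ1 : τ < 1) (hy : y ∈ Icc (1 / (1 + τ)) 1)
    {t : ℝ} (ht : t ∈ Icc (0 : ℝ) 1) : bentLine (kink τ y) y t ≤ tent τ t := by
  by_cases htx : t ≤ kink τ y
  · rw [bentLine, if_pos htx]
    exact one_sub_le_tent hτ0.le hτ1.le ht.1
  by_cases hty : t ≤ y
  · rw [bentLine_kink_eq hτ0 hτ1 hy.1 ⟨(not_le.1 htx).le, hty⟩]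
    exact line_le_tent (abs_midSlope_le hτ0 hτ1 hy) t
  · rw [bentLine, if_neg htx, if_neg hty]
    exact self_le_tent hτ0.le hτ1.le ht.2

end kink

lemma kink_inv_one_add {τ : ℝ} (hτ : 0 < τ) : kink τ (1 / (1 + τ)) = 0 := by
  rw [kink, div_eq_zero_iff]
  left
  field_simp
  ring

lemma midSlope_inv_one_add {τ : ℝ} (hτ : 0 < τ) (hτ1 : τ < 1) :
    midSlope τ (1 / (1 + τ)) = -τ := by
  have := half_lt_of_inv_one_add_le hτ hτ1 le_rfl
  rw [midSlope, div_eq_iff (by linarith)]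
  field_simp
  ring

lemma kink_one (τ : ℝ) : kink τ 1 = τ / (1 + τ) := by
  rw [kink]
  congr 1 <;> ring

lemma midSlope_one (τ : ℝ) : midSlope τ 1 = τ := by
  norm_num [midSlope]

lemma exists_bentLine_kink_eq_tent {τ t : ℝ} (hτ0 : 0 < τ) (hτ1 : τ < 1)
    (ht : t ∈ Icc (0 : ℝ) 1) :
    ∃ y ∈ Icc (1 / (1 + τ)) 1, bentLine (kink τ y) y t = tent τ t := by
  have hlow : 1 / (1 + τ) ≤ 1 := by rw [div_le_one (by linarith)]; linarith
  have hhalf : 1 / 2 < 1 / (1 + τ) := half_lt_of_inv_one_add_le hτ0 hτ1 le_rfl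
  rcases le_or_gt t (1/2) with hth | hth
  · refine ⟨1 / (1 + τ), ⟨le_rfl, hlow⟩, ?_⟩
    rw [bentLine_kink_eq hτ0 hτ1 le_rfl
        ⟨by rw [kink_inv_one_add hτ0]; exact ht.1, by linarith⟩,
      midSlope_inv_one_add hτ0 hτ1, tent, abs_of_nonpos (by linarith)]
    ring
  · refine ⟨1, ⟨hlow, le_rfl⟩, ?_⟩
    rw [bentLine_kink_eq hτ0 hτ1 hlow ⟨(kink_lt_half hτ0 hτ1 hlow).le.trans hth.le, ht.2⟩,
      midSlope_one, tent, abs_of_pos (by linarith)]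

lemma isGreatest_bentLine_kink {τ t : ℝ} (hτ0 : 0 < τ) (hτ1 : τ < 1)
    (ht : t ∈ Icc (0 : ℝ) 1) :
    IsGreatest ((fun y => bentLine (kink τ y) y t) '' Icc (1 / (1 + τ)) 1) (tent τ t) := by
  refine ⟨exists_bentLine_kink_eq_tent hτ0 hτ1 ht, ?_⟩
  rintro _ ⟨y, hy, rfl⟩
  exact bentLine_kink_le_tent hτ0 hτ1 hy ht

theorem P_half_indep (τ₀ : ℝ) (hτ : τ₀ ∈ Set.Ioo (0:ℝ) 1)
    (P : ℝ → ℝ → ℝ → ℝ)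
    (hP : ∀ x y t, P x y t = if t ≤ x then 1 - t
      else if t ≤ y then ((1 - x - y)/(x - y)) * (t - y) + y else t)
    (h : ℝ → ℝ) (hh : ∀ y, h y = (-1 + y + τ₀ * y) / (-3 + τ₀ + 4 * y))
    (T : ℝ → ℝ)
    (hT : ∀ t, T t = if t ≤ 1/2 then 1 + ((1 - τ₀/2) - 1) / (1/2) * t
      else (1 - τ₀/2) + (1 - (1 - τ₀/2)) / (1/2) * (t - 1/2)) :
    (∀ y ∈ Set.Icc (1/(1 + τ₀)) 1, P (h y) y (1/2) = 1 - τ₀/2) ∧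
    (∀ t ∈ Set.Icc (0:ℝ) 1,
      sSup ((fun y => P (h y) y t) '' Set.Icc (1/(1 + τ₀)) 1) = T t) := by
  obtain ⟨hτ0, hτ1⟩ := hτ
  obtain rfl : P = bentLine := by funext x y t; exact hP x y t
  obtain rfl : h = kink τ₀ := funext hh
  obtain rfl : T = tent τ₀ := funext fun t => (hT t).trans (tent_eq_ite τ₀ t).symm
  exact ⟨fun y hy => bentLine_kink_half hτ0 hτ1 hy.1,
    fun t ht => (isGreatest_bentLine_kink hτ0 hτ1 ht).csSup_eq⟩
end
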